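/- arXiv:2212.09620 — 2 statements merged into one kernel-verified Lean document; each statement's English description precedes it below -/
import Mathlib

section
/- If $X \subseteq \binom{[n]}{k}$ is an order ideal in the Gale order (i.e., $y \in X$ and $x \leq y$ imply $x \in X$), then any linear extension of the Gale order on $X$ is a shelling order. -/
/-!
Let `A = L i` come before `B = L j`. If some `b ∈ B \ A` has a gap below it, i.e. some
`1 ≤ b' < b` with `b' ∉ B`, then exchanging `b` for `b'` gives a Gale-smaller `k`-set, which
lies in the ideal and hence comes before `B`; it meets `B` in `B \ {b} ⊇ A ∩ B`. Otherwise every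
element of `B \ A` sits on top of an initial segment contained in `B`, and counting elements
`≤ t` shows `B ≤ A` in the Gale order, so `B` would come before `A`.
-/

/-- Increasing enumeration of a finite set of naturals. -/
def sortedL (x : Finset ℕ) : List ℕ := x.sort (· ≤ ·)

/-- The Gale (Bruhat) order on finite subsets of ℕ: componentwise comparison of
the increasing enumerations. -/
def GaleLE (x y : Finset ℕ) : Prop :=
  ∀ i (hx : i < (sortedL x).length) (hy : i < (sortedL y).length),
    (sortedL x).get ⟨i, hx⟩ ≤ (sortedL y).get ⟨i, hy⟩

def GaleLT (x y : Finset ℕ) : Prop := GaleLE x y ∧ x ≠ y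

/-- `C` is a shelling order: for all `i < j` there is `z < j` with
`|C z ∩ C j| = k - 1` and `C i ∩ C j ⊆ C z ∩ C j`. -/
def IsShellingOrder (k : ℕ) {h : ℕ} (C : Fin h → Finset ℕ) : Prop :=
  ∀ i j : Fin h, i < j → ∃ z : Fin h, z < j ∧
    ((C z ∩ C j).card = k - 1 ∧ C i ∩ C j ⊆ C z ∩ C j)

open Finset

lemma card_filter_le_orderEmbOfFin {α : Type*} [LinearOrder α] (s : Finset α) (i : Fin #s) :
    #{a ∈ s | a ≤ s.orderEmbOfFin rfl i} = i + 1 := by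
  set e := s.orderEmbOfFin rfl
  have : {a ∈ s | a ≤ e i} = (Iic i).map e.toEmbedding := by
    ext a
    simp only [mem_filter, mem_map, mem_Iic, RelEmbedding.coe_toEmbedding]
    constructor
    · rintro ⟨ha, hle⟩
      obtain ⟨j, rfl⟩ : a ∈ Set.range e := by rwa [range_orderEmbOfFin]
      exact ⟨j, e.le_iff_le.mp hle, rfl⟩
    · rintro ⟨j, hj, rfl⟩
      exact ⟨orderEmbOfFin_mem s rfl j, e.monotone hj⟩
  rw [this, card_map, Fin.card_Iic]

section Exchange

variable {α : Type*} [DecidableEq α] {s : Finset α} {a b : α}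

lemma card_insert_erase (ha : a ∈ s) (hb : b ∉ s) : #(insert b (s.erase a)) = #s := by
  rw [card_insert_of_notMem fun h => hb (mem_of_mem_erase h), card_erase_add_one ha]

lemma insert_erase_inter_self (hb : b ∉ s) : insert b (s.erase a) ∩ s = s.erase a := by
  rw [insert_inter_of_notMem hb, inter_eq_left.2 (erase_subset a s)]

end Exchange

lemma galeLE_of_card_filter_le {x y : Finset ℕ}
    (h : ∀ t, #{a ∈ y | a ≤ t} ≤ #{a ∈ x | a ≤ t}) : GaleLE x y := by
  intro i hx hy
  have hx' : i < #x := by simpa [sortedL] using hx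
  have hy' : i < #y := by simpa [sortedL] using hy
  change x.orderEmbOfFin rfl ⟨i, hx'⟩ ≤ y.orderEmbOfFin rfl ⟨i, hy'⟩
  by_contra! hlt
  have hsub : {a ∈ x | a ≤ y.orderEmbOfFin rfl ⟨i, hy'⟩} ⊂
      {a ∈ x | a ≤ x.orderEmbOfFin rfl ⟨i, hx'⟩} :=
    (ssubset_iff_of_subset fun a ha => by
      simp only [mem_filter] at ha ⊢; exact ⟨ha.1, ha.2.trans hlt.le⟩).2
      ⟨x.orderEmbOfFin rfl ⟨i, hx'⟩, by simp, by simpa using hlt⟩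
  have hy_le := h (y.orderEmbOfFin rfl ⟨i, hy'⟩)
  have hx_lt := card_lt_card hsub
  rw [card_filter_le_orderEmbOfFin] at hy_le hx_lt
  omega

lemma galeLE_insert_erase {B : Finset ℕ} {b b' : ℕ} (hb' : b' ∉ B) (hlt : b' < b) :
    GaleLE (insert b' (B.erase b)) B := by
  refine galeLE_of_card_filter_le fun t =>
    card_le_card_of_injOn (fun c => if c = b then b' else c) (fun c hc => ?_) (fun c hc d hd => ?_)
  · simp only [coe_filter, Set.mem_ofPred_eq, mem_insert, mem_erase] at hc ⊢
    split_ifs with hcb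
    · exact ⟨Or.inl rfl, by omega⟩
    · exact ⟨Or.inr ⟨hcb, hc.1⟩, hc.2⟩
  · simp only [coe_filter, Set.mem_ofPred_eq] at hc hd
    grind

lemma galeLE_of_forall_Ico_subset {A B : Finset ℕ} (hcard : #A = #B) (hA : ∀ a ∈ A, 1 ≤ a)
    (hB : ∀ b ∈ B \ A, Ico 1 b ⊆ B) : GaleLE B A := by
  refine galeLE_of_card_filter_le fun t => ?_
  by_cases hbig : ∃ b ∈ B \ A, t < b
  · obtain ⟨b, hbBA, htb⟩ := hbig
    refine card_le_card fun a ha => ?_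
    rw [mem_filter] at ha ⊢
    exact ⟨hB b hbBA (mem_Ico.2 ⟨hA a ha.1, by omega⟩), ha.2⟩
  · push Not at hbig
    have htail : #{b ∈ B | ¬b ≤ t} ≤ #{a ∈ A | ¬a ≤ t} := card_le_card fun b hb => by
      rw [mem_filter] at hb ⊢
      by_contra hbA
      exact hb.2 (hbig b (mem_sdiff.2 ⟨hb.1, fun h => hbA ⟨h, hb.2⟩⟩))
    have := card_filter_add_card_filter_not (s := A) (· ≤ t)
    have := card_filter_add_card_filter_not (s := B) (· ≤ t)
    omega

/-- Any linear extension of the Gale order on an order ideal of `k`-subsets of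
`[n]` is a shelling order. -/
theorem ideal_linear_extension_is_shelling
    (n k h : ℕ) (X : Set (Finset ℕ))
    (hX : ∀ x ∈ X, x ⊆ Finset.Icc 1 n ∧ x.card = k)
    (hideal : ∀ y ∈ X, ∀ x : Finset ℕ, x ⊆ Finset.Icc 1 n → x.card = k →
      GaleLE x y → x ∈ X)
    (L : Fin h → Finset ℕ)
    (hinj : Function.Injective L)
    (himg : ∀ x, x ∈ X ↔ ∃ i, L i = x)
    (hlin : ∀ i j : Fin h, GaleLT (L i) (L j) → i < j) :
    IsShellingOrder k L := by
  intro i j hij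
  have hLj : L j ∈ X := (himg _).2 ⟨j, rfl⟩
  obtain ⟨hAsub, hAcard⟩ := hX _ ((himg _).2 ⟨i, rfl⟩)
  obtain ⟨hBsub, hBcard⟩ := hX _ hLj
  by_cases hswap : ∀ b ∈ L j \ L i, Ico 1 b ⊆ L j
  · have hBA := galeLE_of_forall_Ico_subset (hAcard.trans hBcard.symm)
      (fun a ha => (mem_Icc.1 (hAsub ha)).1) hswap
    exact absurd (hlin j i ⟨hBA, fun e => hij.ne' (hinj e)⟩) hij.not_gt
  push Not at hswap
  obtain ⟨b, hb, hIco⟩ := hswap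
  obtain ⟨b', hb'Ico, hb'⟩ := not_subset.1 hIco
  rw [mem_sdiff] at hb
  rw [mem_Ico] at hb'Ico
  set B' := insert b' ((L j).erase b)
  have hB'sub : B' ⊆ Icc 1 n := insert_subset
    (mem_Icc.2 ⟨hb'Ico.1, by have := mem_Icc.1 (hBsub hb.1); omega⟩)
    ((erase_subset _ _).trans hBsub)
  have hgale : GaleLE B' (L j) := galeLE_insert_erase hb' hb'Ico.2
  have hB'X : B' ∈ X := hideal _ hLj _ hB'sub (card_insert_erase hb.1 hb' ▸ hBcard) hgale
  obtain ⟨z, hz⟩ := (himg _).1 hB'X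
  have hB'ne : B' ≠ L j := fun e => hb' (e ▸ mem_insert_self _ _)
  refine ⟨z, hlin z j ⟨hz ▸ hgale, hz ▸ hB'ne⟩, ?_, ?_⟩ <;>
    rw [hz, insert_erase_inter_self hb']
  · rw [card_erase_of_mem hb.1, hBcard]
  · exact subset_erase.2 ⟨inter_subset_right, fun h => hb.2 (mem_inter.1 h).1⟩
end

section
/- Let $Y \subseteq \mathrm{Conf}_k([n])$ be an order ideal in the Bruhat order on $\mathrm{Conf}_k([n])$. Then any linear extension of $Y$ is a flag shelling order, i.e., listing the elements $L_1, \ldots, L_h$ of $Y$ in a way compatible with the Bruhat order, the sequence of flags $(P(L_1), \ldots, P(L_h))$ is a shelling order of the simplicial complex $\Delta(Y)$. -/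
/-- `y` is a valid element of `Conf_k([n])`: an injective `k`-tuple from `[n]`
(1-based positions `1, …, k`). -/
def ValidTuple (n k : ℕ) (y : ℕ → ℕ) : Prop :=
  (∀ j, 1 ≤ j → j ≤ k → y j ∈ Finset.Icc 1 n) ∧
  (∀ i j, 1 ≤ i → i ≤ k → 1 ≤ j → j ≤ k → y i = y j → i = j)

/-- `P^{(r)}(y)`: the set of the first `r` entries of the tuple `y`. -/
def Pr (y : ℕ → ℕ) (r : ℕ) : Finset ℕ := (Finset.Icc 1 r).image y

/-- The Bruhat order on `Conf_k([n])`: `x ≤ y` iff `P^{(i)}(x) ≤ P^{(i)}(y)` in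
the Gale order for all `i ∈ [k]`. -/
def BruhatLE (k : ℕ) (x y : ℕ → ℕ) : Prop :=
  ∀ i, 1 ≤ i → i ≤ k → GaleLE (Pr x i) (Pr y i)

def BruhatLT (k : ℕ) (x y : ℕ → ℕ) : Prop :=
  BruhatLE k x y ∧ ∃ i, 1 ≤ i ∧ i ≤ k ∧ x i ≠ y i

/-- The flag `P(y) = {P^{(1)}(y), …, P^{(k)}(y)}`, a facet of the order complex
`Δ(Y)`. -/
def Pflag (k : ℕ) (y : ℕ → ℕ) : Finset (Finset ℕ) := (Finset.Icc 1 k).image (Pr y)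

open Finset

def countLE (S : Finset ℕ) (m : ℕ) : ℕ := #{a ∈ S | a ≤ m}

lemma sortedL_get_le_iff (S : Finset ℕ) (i : ℕ) (h : i < (sortedL S).length) (m : ℕ) :
    (sortedL S).get ⟨i, h⟩ ≤ m ↔ i < countLE S m := by
  have hi : i < #S := by rwa [sortedL, length_sort] at h
  let f := S.orderEmbOfFin rfl
  change f ⟨i, hi⟩ ≤ m ↔ _
  constructor
  · intro hle
    calc i < #(Iic (⟨i, hi⟩ : Fin #S)) := by simp
      _ = #((Iic ⟨i, hi⟩).map f.toEmbedding) := (card_map _).symm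
      _ ≤ countLE S m := card_le_card fun a ha => by
          obtain ⟨j, hj, rfl⟩ := mem_map.1 ha
          exact mem_filter.2 ⟨S.orderEmbOfFin_mem rfl j, (f.monotone (mem_Iic.1 hj)).trans hle⟩
  · intro hlt
    by_contra! hgt
    have : countLE S m ≤ i := calc
      countLE S m ≤ #((Iio (⟨i, hi⟩ : Fin #S)).map f.toEmbedding) := card_le_card fun a ha => by
          obtain ⟨haS, ham⟩ := mem_filter.1 ha
          obtain ⟨j, rfl⟩ : a ∈ Set.range f := by rw [range_orderEmbOfFin]; exact haS
          exact mem_map_of_mem _ (mem_Iio.2 (f.lt_iff_lt.1 (ham.trans_lt hgt)))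
      _ = i := by simp
    omega

lemma galeLE_refl (A : Finset ℕ) : GaleLE A A := fun _ _ _ => le_rfl

lemma galeLE_iff_countLE {A B : Finset ℕ} (h : #A = #B) :
    GaleLE A B ↔ ∀ m, countLE B m ≤ countLE A m := by
  constructor
  · intro hAB m
    by_contra! hlt
    have hB : countLE A m < (sortedL B).length :=
      hlt.trans_le ((card_filter_le _ _).trans (by rw [sortedL, length_sort]))
    have hA : countLE A m < (sortedL A).length := by
      rw [sortedL, length_sort, h]; rwa [sortedL, length_sort] at hB
    exact lt_irrefl _ ((sortedL_get_le_iff A _ hA m).1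
      ((hAB _ hA hB).trans ((sortedL_get_le_iff B _ hB m).2 hlt)))
  · intro hcount i hA hB
    exact (sortedL_get_le_iff A i hA _).2
      (((sortedL_get_le_iff B i hB _).1 le_rfl).trans_le (hcount _))

lemma countLE_insert {a : ℕ} {S : Finset ℕ} (ha : a ∉ S) (m : ℕ) :
    countLE (insert a S) m = countLE S m + if a ≤ m then 1 else 0 := by
  unfold countLE
  rw [filter_insert]
  split_ifs
  · exact card_insert_of_notMem fun h => ha (mem_filter.1 h).1
  · rfl

lemma countLE_insert_of_lt {a m : ℕ} (S : Finset ℕ) (h : m < a) :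
    countLE (insert a S) m = countLE S m := by
  simp only [countLE, filter_insert, if_neg h.not_ge]

lemma countLE_mono {S T : Finset ℕ} (h : S ⊆ T) (m : ℕ) : countLE S m ≤ countLE T m :=
  card_le_card (filter_subset_filter _ h)

lemma exists_mem_notMem_of_countLE_lt {A B : Finset ℕ} {m : ℕ} (h : countLE B m < countLE A m) :
    ∃ w ∈ A, w ≤ m ∧ w ∉ B := by
  by_contra! hAB
  exact h.not_ge (card_le_card fun w hw =>
    mem_filter.2 ⟨hAB w (mem_filter.1 hw).1 (mem_filter.1 hw).2, (mem_filter.1 hw).2⟩)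

lemma galeLT_insert_insert {w c : ℕ} {S : Finset ℕ} (hwc : w < c) (hw : w ∉ S) (hc : c ∉ S) :
    GaleLT (insert w S) (insert c S) := by
  refine ⟨?_, fun h => ?_⟩
  · rw [galeLE_iff_countLE (by rw [card_insert_of_notMem hw, card_insert_of_notMem hc])]
    intro m
    rw [countLE_insert hw, countLE_insert hc]
    split_ifs <;> omega
  · have : c ∈ insert w S := h ▸ mem_insert_self c S
    rcases mem_insert.1 this with h | h
    · omega
    · exact hc h

section Tuple

variable {n k : ℕ} {x y z : ℕ → ℕ}

lemma pr_zero (y : ℕ → ℕ) : Pr y 0 = ∅ := rfl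

lemma pr_eq_insert {r : ℕ} (hr : 1 ≤ r) : Pr y r = insert (y r) (Pr y (r - 1)) := by
  rw [Pr, Pr, ← insert_Icc_pred_right_eq_Icc hr, image_insert]; rfl

lemma pr_mono {r s : ℕ} (h : r ≤ s) : Pr y r ⊆ Pr y s :=
  image_subset_image (Icc_subset_Icc_right h)

lemma pr_congr {s : ℕ} (h : ∀ p ∈ Icc 1 s, z p = y p) : Pr z s = Pr y s :=
  image_congr fun p hp => h p hp

lemma card_pr (hy : Set.InjOn y (Set.Icc 1 k)) {s : ℕ} (hs : s ≤ k) : #(Pr y s) = s := by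
  rw [Pr, card_image_of_injOn (hy.mono (by simpa using Set.Icc_subset_Icc_right hs)),
    Nat.card_Icc, Nat.add_sub_cancel]

lemma apply_notMem_pr (hy : Set.InjOn y (Set.Icc 1 k)) {r p : ℕ} (hrp : r < p) (hpk : p ≤ k) :
    y p ∉ Pr y r := by
  simp only [Pr, mem_image, mem_Icc]
  rintro ⟨q, ⟨hq1, hqr⟩, hq⟩
  have : q = p := hy ⟨hq1, by omega⟩ ⟨by omega, hpk⟩ hq
  omega

lemma ValidTuple.injOn (hy : ValidTuple n k y) : Set.InjOn y (Set.Icc 1 k) :=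
  fun i hi j hj h => hy.2 i j hi.1 hi.2 hj.1 hj.2 h

lemma validTuple_iff_pr : ValidTuple n k y ↔ Pr y k ⊆ Icc 1 n ∧ #(Pr y k) = k := by
  have hcard := card_image_iff (s := Icc 1 k) (f := y)
  rw [Nat.card_Icc, Nat.add_sub_cancel, coe_Icc] at hcard
  rw [Pr, image_subset_iff, hcard]
  simp only [ValidTuple, mem_Icc, Set.InjOn, Set.mem_Icc]
  constructor
  · exact fun ⟨h1, h2⟩ => ⟨fun p hp => h1 p hp.1 hp.2, fun i hi j hj => h2 i j hi.1 hi.2 hj.1 hj.2⟩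
  · exact fun ⟨h1, h2⟩ => ⟨fun p hp hp' => h1 p ⟨hp, hp'⟩,
      fun i j hi hi' hj hj' => h2 ⟨hi, hi'⟩ ⟨hj, hj'⟩⟩

lemma pr_comp_swap_of_ne {r s : ℕ} (hr : 1 ≤ r) (hs : s ≠ r) :
    Pr (y ∘ Equiv.swap r (r + 1)) s = Pr y s := by
  rcases hs.lt_or_gt with hs | hs
  · exact pr_congr fun p hp => by
      rw [Function.comp_apply, Equiv.swap_apply_of_ne_of_ne] <;> (simp at hp; omega)
  · have hperm := map_perm (s := Icc 1 s) (σ := Equiv.swap r (r + 1)) fun p hp => by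
      rw [coe_Icc, Set.mem_Icc]
      by_contra hp'
      exact hp (Equiv.swap_apply_of_ne_of_ne (by omega) (by omega))
    rw [map_eq_image, Equiv.coe_toEmbedding] at hperm
    rw [Pr, ← image_image, hperm, Pr]

lemma pr_update_of_lt {r s w : ℕ} (hs : s < r) : Pr (Function.update y r w) s = Pr y s :=
  pr_congr fun p hp => Function.update_of_ne (by simp at hp; omega) _ _

lemma exists_countLE_lt_of_not_bruhatLE (hx : Set.InjOn x (Set.Icc 1 k))
    (hy : Set.InjOn y (Set.Icc 1 k)) (h : ¬ BruhatLE k y x) :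
    ∃ s m, 1 ≤ s ∧ s ≤ k ∧ m < y s ∧ countLE (Pr y s) m < countLE (Pr x s) m := by
  classical
  have hex : ∃ s, s ≤ k ∧ ¬ GaleLE (Pr y s) (Pr x s) := by
    simp only [BruhatLE, not_forall] at h
    obtain ⟨s, -, hsk, hs⟩ := h
    exact ⟨s, hsk, hs⟩
  obtain ⟨hsk, hs⟩ := Nat.find_spec hex
  set s := Nat.find hex
  have hs1 : 1 ≤ s := Nat.one_le_iff_ne_zero.2 fun h0 =>
    hs (by rw [h0, pr_zero, pr_zero]; exact galeLE_refl _)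
  have hprev : GaleLE (Pr y (s - 1)) (Pr x (s - 1)) := by
    by_contra hprev
    exact Nat.find_min hex (m := s - 1) (by omega) ⟨by omega, hprev⟩
  rw [galeLE_iff_countLE (by rw [card_pr hy (by omega), card_pr hx (by omega)])] at hs hprev
  obtain ⟨m, hm⟩ := not_forall.1 hs
  rw [not_le] at hm
  refine ⟨s, m, hs1, hsk, lt_of_not_ge fun hym => ?_, hm⟩
  -- If `y s ≤ m`, level `s` adds one to the count of `y` at `m` and at most one to that of `x`,
  -- so the inequality at level `s - 1` would persist.
  have hprevm := hprev m
  rw [pr_eq_insert hs1, pr_eq_insert hs1, countLE_insert (apply_notMem_pr hy (by omega) hsk),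
    countLE_insert (apply_notMem_pr hx (by omega) hsk), if_pos hym] at hm
  split_ifs at hm <;> omega

lemma exists_descent_of_countLE_lt {s m : ℕ} (hs : s ≤ k) (hm : m < y s)
    (h : countLE (Pr y s) m < countLE (Pr x s) m) :
    ∃ r, s ≤ r ∧ r ≤ k ∧ m < y r ∧ countLE (Pr y r) m < countLE (Pr x r) m ∧
      (r < k → y (r + 1) < y r) := by
  obtain ⟨d, rfl⟩ := Nat.exists_eq_add_of_le hs
  induction d generalizing s with
  | zero => exact ⟨s, le_rfl, le_rfl, hm, h, by omega⟩
  | succ d ih =>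
    by_cases hdesc : y (s + 1) < y s
    · exact ⟨s, le_rfl, by omega, hm, h, fun _ => hdesc⟩
    -- along an ascent the new entry of `y` exceeds `m`, so the deficit persists.
    have hm' : m < y (s + 1) := by omega
    have h' : countLE (Pr y (s + 1)) m < countLE (Pr x (s + 1)) m := by
      rw [pr_eq_insert (by omega), Nat.add_sub_cancel, countLE_insert_of_lt _ hm']
      exact h.trans_le (countLE_mono (pr_mono (by omega)) m)
    obtain ⟨r, hsr, hrk, hr⟩ := ih (s := s + 1) hm' h' le_self_add
    exact ⟨r, by omega, by omega, hr.1, hr.2.1, fun h => hr.2.2 (by omega)⟩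

lemma exists_lowering_of_countLE_lt (hx : ValidTuple n k x) (hy : ValidTuple n k y) {r m : ℕ}
    (hr1 : 1 ≤ r) (hrk : r ≤ k) (hm : m < y r) (h : countLE (Pr y r) m < countLE (Pr x r) m)
    (hdesc : r < k → y (r + 1) < y r) :
    ∃ z, ValidTuple n k z ∧ GaleLT (Pr z r) (Pr y r) ∧ ∀ s ≤ k, s ≠ r → Pr z s = Pr y s := by
  have hyr : y r ∉ Pr y (r - 1) := apply_notMem_pr hy.injOn (by omega) hrk
  rw [pr_eq_insert hr1]
  rcases hrk.lt_or_eq with hrk | rfl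
  · have hPr : ∀ s ≠ r, Pr (y ∘ Equiv.swap r (r + 1)) s = Pr y s :=
      fun s hs => pr_comp_swap_of_ne hr1 hs
    refine ⟨y ∘ Equiv.swap r (r + 1), ?_, ?_, fun s _ hs => hPr s hs⟩
    · rw [validTuple_iff_pr, hPr k hrk.ne']
      exact validTuple_iff_pr.1 hy
    · rw [pr_eq_insert hr1, hPr (r - 1) (by omega), Function.comp_apply, Equiv.swap_apply_left]
      exact galeLT_insert_insert (hdesc hrk) (apply_notMem_pr hy.injOn (by omega) hrk) hyr
  · obtain ⟨w, hwx, hwm, hwy⟩ := exists_mem_notMem_of_countLE_lt h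
    have hw : w ∉ Pr y (r - 1) := fun hw => hwy (pr_mono (by omega) hw)
    have hPr : Pr (Function.update y r w) r = insert w (Pr y (r - 1)) := by
      rw [pr_eq_insert hr1, pr_update_of_lt (by omega), Function.update_self]
    refine ⟨Function.update y r w, ?_, ?_, fun s hsk hs => pr_update_of_lt (by omega)⟩
    · rw [validTuple_iff_pr, hPr, card_insert_of_notMem hw, card_pr hy.injOn (by omega)]
      refine ⟨insert_subset ((validTuple_iff_pr.1 hx).1 hwx) ?_, by omega⟩
      exact (pr_mono (by omega)).trans (validTuple_iff_pr.1 hy).1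
    · rw [hPr]
      exact galeLT_insert_insert (hwm.trans_lt hm) hw hyr

lemma exists_lowering_of_not_bruhatLE (hx : ValidTuple n k x) (hy : ValidTuple n k y)
    (h : ¬ BruhatLE k y x) :
    ∃ r z, 1 ≤ r ∧ r ≤ k ∧ Pr x r ≠ Pr y r ∧ ValidTuple n k z ∧ GaleLT (Pr z r) (Pr y r) ∧
      ∀ s ≤ k, s ≠ r → Pr z s = Pr y s := by
  obtain ⟨s, m, hs1, hsk, hm, hcount⟩ := exists_countLE_lt_of_not_bruhatLE hx.injOn hy.injOn h
  obtain ⟨r, hsr, hrk, hmr, hcount', hdesc⟩ := exists_descent_of_countLE_lt hsk hm hcount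
  obtain ⟨z, hz, hzr, hzs⟩ :=
    exists_lowering_of_countLE_lt hx hy (by omega) hrk hmr hcount' hdesc
  exact ⟨r, z, by omega, hrk, fun hxy => hcount'.ne (by rw [hxy]), hz, hzr, hzs⟩

lemma bruhatLT_of_pr {r : ℕ} (hrk : r ≤ k) (hr : GaleLT (Pr z r) (Pr y r))
    (hs : ∀ s ≤ k, s ≠ r → Pr z s = Pr y s) : BruhatLT k z y := by
  refine ⟨fun s _ hsk => ?_, ?_⟩
  · by_cases hsr : s = r
    · exact hsr ▸ hr.1
    · exact hs s hsk hsr ▸ galeLE_refl _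
  · by_contra! hzy
    exact hr.2 (pr_congr fun p hp => by simp only [mem_Icc] at hp; exact hzy p hp.1 (by omega))

lemma pr_mem_pflag {r : ℕ} (hr1 : 1 ≤ r) (hrk : r ≤ k) : Pr y r ∈ Pflag k y :=
  mem_image_of_mem _ (mem_Icc.2 ⟨hr1, hrk⟩)

lemma pr_notMem_pflag (hx : Set.InjOn x (Set.Icc 1 k)) (hy : Set.InjOn y (Set.Icc 1 k))
    {r : ℕ} (hrk : r ≤ k) (hne : Pr x r ≠ Pr y r) : Pr y r ∉ Pflag k x := by
  simp only [Pflag, mem_image, mem_Icc]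
  rintro ⟨s, ⟨-, hsk⟩, hs⟩
  have : s = r := by rw [← card_pr hx hsk, ← card_pr hy hrk, hs]
  exact hne (this ▸ hs)

lemma pflag_inter_eq_erase (hy : Set.InjOn y (Set.Icc 1 k)) {r : ℕ} (hrk : r ≤ k)
    (hne : Pr z r ≠ Pr y r) (hs : ∀ s ≤ k, s ≠ r → Pr z s = Pr y s) :
    Pflag k z ∩ Pflag k y = (Pflag k y).erase (Pr y r) := by
  ext a
  simp only [Pflag, mem_inter, mem_erase, mem_image, mem_Icc]
  constructor
  · rintro ⟨⟨s, ⟨hs1, hsk⟩, rfl⟩, hy'⟩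
    refine ⟨fun hsr => ?_, hy'⟩
    by_cases h : s = r
    · exact hne (h ▸ hsr)
    · rw [hs s hsk h] at hsr
      exact h (by rw [← card_pr hy hsk, ← card_pr hy hrk, hsr])
  · rintro ⟨hne', s, ⟨hs1, hsk⟩, rfl⟩
    have hsr : s ≠ r := fun h => hne' (h ▸ rfl)
    exact ⟨⟨s, ⟨hs1, hsk⟩, hs s hsk hsr⟩, s, ⟨hs1, hsk⟩, rfl⟩

end Tuple

/-- Any linear extension `L 1, …, L h` of an order ideal `Y` of the Bruhat
order on `Conf_k([n])` is a flag shelling order: the sequence of flags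
`P(L 1), …, P(L h)` is a shelling order of `Δ(Y)`. -/
theorem ideal_linear_extension_is_flag_shelling
    (n k h : ℕ) (L : ℕ → (ℕ → ℕ))
    (hvalid : ∀ m, 1 ≤ m → m ≤ h → ValidTuple n k (L m))
    (hdist : ∀ m m', 1 ≤ m → m < m' → m' ≤ h →
      ∃ p, 1 ≤ p ∧ p ≤ k ∧ L m p ≠ L m' p)
    (hideal : ∀ m, 1 ≤ m → m ≤ h → ∀ x : ℕ → ℕ, ValidTuple n k x →
      BruhatLE k x (L m) → ∃ m', 1 ≤ m' ∧ m' ≤ h ∧ ∀ p, 1 ≤ p → p ≤ k → L m' p = x p)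
    (hlin : ∀ m m', 1 ≤ m → m ≤ h → 1 ≤ m' → m' ≤ h →
      BruhatLT k (L m) (L m') → m < m') :
    ∀ i j, 1 ≤ i → i < j → j ≤ h → ∃ z, 1 ≤ z ∧ z < j ∧
      (Pflag k (L z) ∩ Pflag k (L j)).card = (Pflag k (L j)).card - 1 ∧
      Pflag k (L i) ∩ Pflag k (L j) ⊆ Pflag k (L z) ∩ Pflag k (L j) := by
  intro i j hi hij hjh
  have hx := hvalid i hi (by omega)
  have hy := hvalid j (by omega) hjh
  have hyx : ¬ BruhatLE k (L j) (L i) := fun hle => by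
    obtain ⟨p, hp1, hpk, hp⟩ := hdist i j hi hij hjh
    have := hlin j i (by omega) hjh hi (by omega) ⟨hle, p, hp1, hpk, Ne.symm hp⟩
    omega
  obtain ⟨r, z, hr1, hrk, hxy, hz, hzr, hzs⟩ := exists_lowering_of_not_bruhatLE hx hy hyx
  obtain ⟨m, hm1, hmh, hmz⟩ := hideal j (by omega) hjh z hz (bruhatLT_of_pr hrk hzr hzs).1
  have hPr : ∀ s ≤ k, Pr (L m) s = Pr z s := fun s hsk =>
    pr_congr fun p hp => by simp only [mem_Icc] at hp; exact hmz p hp.1 (by omega)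
  have hmr : GaleLT (Pr (L m) r) (Pr (L j) r) := hPr r hrk ▸ hzr
  have hms : ∀ s ≤ k, s ≠ r → Pr (L m) s = Pr (L j) s := fun s hsk hs =>
    (hPr s hsk).trans (hzs s hsk hs)
  have hflag := pflag_inter_eq_erase hy.injOn hrk hmr.2 hms
  refine ⟨m, hm1, hlin m j hm1 hmh (by omega) hjh (bruhatLT_of_pr hrk hmr hms), ?_, ?_⟩
  · rw [hflag, card_erase_of_mem (pr_mem_pflag hr1 hrk)]
  · rw [hflag]
    exact fun a ha => mem_erase.2 ⟨fun hay => pr_notMem_pflag hx.injOn hy.injOn hrk hxy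
      (hay ▸ (mem_inter.1 ha).1), (mem_inter.1 ha).2⟩
end
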